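/- Suppose ε̄ > 0 is such that E^{ε̄} is pointed, and define ϑ : ℝ^p → ℝ by ϑ(x) := dist(x − x_k, ℝ^p ∖ E^{ε̄}) − dist(x − x_k, E^{ε̄}). Then ϑ is Lipschitz continuous (hence continuous), concave (hence quasi-concave), increasing with respect to the cone E^{ε̄} (x_2 − x_1 ∈ E^{ε̄} implies ϑ(x_1) ≤ ϑ(x_2)), increasing with respect to the componentwise order (x ≤ y componentwise implies ϑ(x) ≤ ϑ(y)), and satisfies ϑ(x_k) = 0 and ϑ(x_j) > ϑ(x_k) for all j = 1, …, t. -/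

import Mathlib

/-!
For a convex set `C`, the signed distance `x ↦ dist(x, Cᶜ) - dist(x, C)` is the supremum of
`ρ - ‖x - c‖` over all closed balls `closedBall c ρ ⊆ C`. By convexity of `C`, convex combinations
of such balls are again such balls, so this is a supremum of a jointly concave function over a
convex parameter set, hence concave. Since `E^ε̄` is a convex cone, translating by an element of
`E^ε̄` maps it into itself, which gives monotonicity along `E^ε̄` and, as `ℝᵖ₊ ⊆ E^ε̄`, along the
componentwise order. Pointedness puts `-δ e ∉ E^ε̄` for `δ > 0`, so `0` lies on the boundary of
`E^ε̄` and `ϑ(x_k) = 0`; finally the ball of radius `ε̄` about `x_j - x_k` lies in `E^ε̄`, so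
`ϑ(x_j) ≥ ε̄`.
-/

open Metric Set Pointwise

namespace Metric

section MetricSpace

variable {α : Type*} [MetricSpace α]

noncomputable def signedInfDist (C : Set α) (x : α) : ℝ := infDist x Cᶜ - infDist x C

theorem signedInfDist_empty : signedInfDist (∅ : Set α) = 0 :=
  funext fun x => by simp [signedInfDist, infDist_zero_of_mem (mem_univ x)]

theorem signedInfDist_univ : signedInfDist (univ : Set α) = 0 :=
  funext fun x => by simp [signedInfDist, infDist_zero_of_mem (mem_univ x)]

theorem lipschitzWith_signedInfDist (C : Set α) : LipschitzWith 2 (signedInfDist C) := by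
  have h := (lipschitz_infDist_pt (s := Cᶜ)).sub (lipschitz_infDist_pt (s := C))
  rwa [one_add_one_eq_two] at h

theorem signedInfDist_eq_zero_of_mem_of_mem_closure {C : Set α} {x : α} (hx : x ∈ C)
    (hx' : x ∈ closure Cᶜ) : signedInfDist C x = 0 := by
  rw [signedInfDist, infDist_zero_of_mem hx, infDist_zero_of_mem_closure hx', sub_zero]

theorem exists_closedBall_subset_of_lt_signedInfDist {C : Set α} (hC : C.Nonempty) {x : α}
    {m : ℝ} (hm : m < signedInfDist C x) :
    ∃ c ρ, 0 ≤ ρ ∧ closedBall c ρ ⊆ C ∧ m < ρ - dist x c := by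
  by_cases hx : x ∈ C
  · rw [signedInfDist, infDist_zero_of_mem hx, sub_zero] at hm
    rcases lt_or_ge m 0 with hm0 | hm0
    · exact ⟨x, 0, le_rfl, by simpa using hx, by simpa using hm0⟩
    · obtain ⟨ρ, hmρ, hρ⟩ := exists_between hm
      refine ⟨x, ρ, hm0.trans hmρ.le, fun y hy => ?_, by simpa using hmρ⟩
      by_contra hyC
      exact notMem_of_dist_lt_infDist ((dist_comm x y).trans_le hy |>.trans_lt hρ) hyC
  · rw [signedInfDist, infDist_zero_of_mem (show x ∈ Cᶜ from hx), zero_sub, lt_neg] at hm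
    obtain ⟨c, hc, hxc⟩ := (infDist_lt_iff hC).1 hm
    exact ⟨c, 0, le_rfl, by simpa using hc, by linarith⟩

end MetricSpace

section NormedAddCommGroup

variable {E : Type*} [NormedAddCommGroup E] {C : Set E}

theorem signedInfDist_le_signedInfDist_add {v : E} (hv : ∀ z ∈ C, z + v ∈ C) (x : E) :
    signedInfDist C x ≤ signedInfDist C (x + v) := by
  have hin : infDist (x + v) C ≤ infDist x C := by
    rcases C.eq_empty_or_nonempty with rfl | hne
    · simp
    refine (le_infDist hne).2 fun y hy => ?_
    calc infDist (x + v) C ≤ dist (x + v) (y + v) := infDist_le_dist_of_mem (hv y hy)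
      _ = dist x y := dist_add_right x y v
  have hout : infDist x Cᶜ ≤ infDist (x + v) Cᶜ := by
    rcases Cᶜ.eq_empty_or_nonempty with hCc | hne
    · simp [hCc]
    refine (le_infDist hne).2 fun y hy => ?_
    have hyv : y - v ∈ Cᶜ := fun h => hy (by simpa using hv _ h)
    calc infDist x Cᶜ ≤ dist x (y - v) := infDist_le_dist_of_mem hyv
      _ = dist (x + v) y := by rw [← dist_add_right x (y - v) v, sub_add_cancel]
  rw [signedInfDist, signedInfDist]
  linarith

end NormedAddCommGroup

section NormedSpace

variable {E : Type*} [NormedAddCommGroup E] [NormedSpace ℝ E] {C : Set E}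

theorem sub_dist_le_signedInfDist (hC : Cᶜ.Nonempty) {c : E} {ρ : ℝ} (hρ : 0 ≤ ρ)
    (hcC : closedBall c ρ ⊆ C) (x : E) : ρ - dist x c ≤ signedInfDist C x := by
  by_cases hx : x ∈ C
  · rw [signedInfDist, infDist_zero_of_mem hx, sub_zero, le_infDist hC]
    intro y hy
    have hyc : ρ < dist y c := not_le.1 fun h => hy (hcC h)
    linarith [dist_triangle y x c, dist_comm x y]
  · have hρx : ρ ≤ dist x c := not_lt.1 fun h => hx (hcC (mem_closedBall.2 h.le))
    -- a point of `closedBall c ρ` on the segment from `x` to `c`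
    obtain ⟨y, hxy, hyc⟩ := exists_dist_le_le (sub_nonneg.2 hρx) hρ
      (show dist x c ≤ ρ + (dist x c - ρ) by ring_nf; rfl)
    rw [signedInfDist, infDist_zero_of_mem (show x ∈ Cᶜ from hx)]
    linarith [infDist_le_dist_of_mem (x := x) (hcC hyc)]

theorem Convex.closedBall_combo_subset (hC : Convex ℝ C) {c c' : E} {ρ σ a b : ℝ}
    (hρ : 0 ≤ ρ) (hσ : 0 ≤ σ) (hcC : closedBall c ρ ⊆ C) (hc'C : closedBall c' σ ⊆ C)
    (ha : 0 ≤ a) (hb : 0 ≤ b) (hab : a + b = 1) :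
    closedBall (a • c + b • c') (a * ρ + b * σ) ⊆ C := by
  intro z hz
  set m := a * ρ + b * σ
  set v := z - (a • c + b • c')
  have hv : ‖v‖ ≤ m := by rwa [← dist_eq_norm]
  have hmv : (m / m) • v = v := by
    rcases eq_or_ne m 0 with hm | hm
    · simp [norm_le_zero_iff.1 (hm ▸ hv)]
    · rw [div_self hm, one_smul]
  have hz : z = a • (c + (ρ / m) • v) + b • (c' + (σ / m) • v) := by
    calc z = a • c + b • c' + (m / m) • v := by rw [hmv, add_sub_cancel]
      _ = _ := by simp only [m]; module
  have hshift (d : E) {r : ℝ} (hr : 0 ≤ r) : d + (r / m) • v ∈ closedBall d r := by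
    rw [mem_closedBall, dist_eq_norm, add_sub_cancel_left, norm_smul,
      Real.norm_of_nonneg (by positivity)]
    rcases eq_or_ne m 0 with hm | hm
    · simp [hm, hr]
    · calc r / m * ‖v‖ ≤ r / m * m := by gcongr
        _ = r := div_mul_cancel₀ r hm
  rw [hz]
  exact hC (hcC (hshift c hρ)) (hc'C (hshift c' hσ)) ha hb hab

theorem concaveOn_signedInfDist (hC : Convex ℝ C) : ConcaveOn ℝ univ (signedInfDist C) := by
  rcases C.eq_empty_or_nonempty with rfl | hne
  · rw [signedInfDist_empty]; exact concaveOn_const 0 convex_univ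
  rcases Cᶜ.eq_empty_or_nonempty with hCc | hne'
  · rw [compl_empty_iff.1 hCc, signedInfDist_univ]; exact concaveOn_const 0 convex_univ
  refine ⟨convex_univ, fun x _ y _ a b ha hb hab => le_of_forall_pos_le_add fun ε hε => ?_⟩
  obtain ⟨c, ρ, hρ, hcC, hxc⟩ :=
    exists_closedBall_subset_of_lt_signedInfDist hne (sub_lt_self (signedInfDist C x) hε)
  obtain ⟨c', σ, hσ, hc'C, hyc'⟩ :=
    exists_closedBall_subset_of_lt_signedInfDist hne (sub_lt_self (signedInfDist C y) hε)
  have hz := sub_dist_le_signedInfDist hne' (by positivity)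
    (hC.closedBall_combo_subset hρ hσ hcC hc'C ha hb hab) (a • x + b • y)
  have hdist : dist (a • x + b • y) (a • c + b • c') ≤ a * dist x c + b * dist y c' :=
    calc _ ≤ dist (a • x) (a • c) + dist (b • y) (b • c') := dist_add_add_le _ _ _ _
      _ = _ := by rw [dist_smul₀, dist_smul₀, Real.norm_of_nonneg ha, Real.norm_of_nonneg hb]
  simp only [smul_eq_mul]
  nlinarith [mul_le_mul_of_nonneg_left hxc.le ha, mul_le_mul_of_nonneg_left hyc'.le hb]

theorem zero_mem_closure_compl_of_pointed {K : Set E} (hK : K ∩ -K = {0}) {v : E} (hv : v ≠ 0)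
    (hvK : ∀ δ : ℝ, 0 < δ → δ • v ∈ K) : (0 : E) ∈ closure Kᶜ := by
  have hlim : Filter.Tendsto (fun δ : ℝ => -(δ • v)) (nhdsWithin 0 (Ioi 0)) (nhds 0) := by
    have : Continuous fun δ : ℝ => -(δ • v) := by fun_prop
    simpa using (this.tendsto 0).mono_left nhdsWithin_le_nhds
  refine mem_closure_of_tendsto hlim (eventually_nhdsWithin_of_forall fun δ hδ hmem => hv ?_)
  have h0 : δ • v ∈ K ∩ -K := ⟨hvK δ hδ, by simpa using hmem⟩
  rw [hK, mem_singleton_iff, smul_eq_zero] at h0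
  exact h0.resolve_left (ne_of_gt hδ)

end NormedSpace

end Metric

namespace PointedCone

variable {ι n : Type*} [Fintype ι] (g : ι → EuclideanSpace ℝ n)

/-- The cone `cone(g) + ℝⁿ₊`; the paper's `E^ε` is the case `g j = x j - ε • e - x_k`. -/
def spanAddOrthant : PointedCone ℝ (EuclideanSpace ℝ n) where
  carrier := {z | ∃ (lam : ι → ℝ) (r : EuclideanSpace ℝ n),
    0 ≤ lam ∧ (∀ i, 0 ≤ r i) ∧ z = (∑ j, lam j • g j) + r}
  add_mem' := by
    rintro _ _ ⟨l, r, hl, hr, rfl⟩ ⟨l', r', hl', hr', rfl⟩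
    refine ⟨l + l', r + r', add_nonneg hl hl', fun i => add_nonneg (hr i) (hr' i), ?_⟩
    simp only [Pi.add_apply, add_smul, Finset.sum_add_distrib]
    abel
  zero_mem' := ⟨0, 0, le_rfl, fun _ => le_rfl, by simp⟩
  smul_mem' := by
    rintro ⟨c, hc⟩ _ ⟨l, r, hl, hr, rfl⟩
    exact ⟨c • l, c • r, smul_nonneg hc hl, fun i => mul_nonneg hc (hr i),
      by simp [Finset.smul_sum, smul_smul]⟩

variable {g}

theorem mem_spanAddOrthant_of_nonneg {r : EuclideanSpace ℝ n} (hr : ∀ i, 0 ≤ r i) :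
    r ∈ spanAddOrthant g :=
  ⟨0, r, le_rfl, hr, by simp⟩

theorem apply_mem_spanAddOrthant [DecidableEq ι] (j : ι) : g j ∈ spanAddOrthant g :=
  ⟨Pi.single j (1 : ℝ), 0, Pi.single_nonneg.2 zero_le_one, fun _ => le_rfl,
    by simp [Pi.single_apply]⟩

variable [Fintype n] {e : EuclideanSpace ℝ n}

theorem closedBall_add_smul_subset_spanAddOrthant (he : ∀ i, e i = 1) (j : ι) (ε : ℝ) :
    closedBall (g j + ε • e) ε ⊆ spanAddOrthant g := by
  intro z hz
  have hr : ∀ i, 0 ≤ (z - g j) i := fun i => by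
    have hi := neg_abs_le ((z - (g j + ε • e)) i)
    have hnorm : |(z - (g j + ε • e)) i| ≤ ε :=
      (PiLp.norm_apply_le (z - (g j + ε • e)) i).trans (by rwa [← dist_eq_norm])
    simp only [PiLp.sub_apply, PiLp.add_apply, PiLp.smul_apply, he, smul_eq_mul] at hi hnorm ⊢
    linarith
  classical
  simpa using add_mem (apply_mem_spanAddOrthant (g := g) j) (mem_spanAddOrthant_of_nonneg hr)

theorem zero_mem_closure_compl_spanAddOrthant [Nonempty n] (he : ∀ i, e i = 1)
    (hg : (spanAddOrthant g : Set (EuclideanSpace ℝ n)) ∩ -(spanAddOrthant g) = {0}) :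
    (0 : EuclideanSpace ℝ n) ∈ closure (spanAddOrthant g : Set (EuclideanSpace ℝ n))ᶜ := by
  have he0 : e ≠ 0 := fun h => by simpa [h] using he (Classical.arbitrary n)
  exact zero_mem_closure_compl_of_pointed hg he0
    fun δ hδ => mem_spanAddOrthant_of_nonneg fun i => by simp [he, hδ.le]

end PointedCone

open PointedCone

theorem stmt_14_general (p t : ℕ) (hp : 1 ≤ p)
    (x : Fin t → EuclideanSpace ℝ (Fin p)) (xk : EuclideanSpace ℝ (Fin p))
    (e : EuclideanSpace ℝ (Fin p)) (he : ∀ i, e i = 1)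
    (Eeps : ℝ → Set (EuclideanSpace ℝ (Fin p)))
    (hEeps : ∀ ε : ℝ, Eeps ε = {z | ∃ (lam : Fin t → ℝ) (r : EuclideanSpace ℝ (Fin p)),
        (∀ j, 0 ≤ lam j) ∧ (∀ i, 0 ≤ r i) ∧
        z = (∑ j, lam j • (x j - ε • e - xk)) + r})
    (εbar : ℝ) (hεbar : 0 < εbar)
    (hpointed : Eeps εbar ∩ (-(Eeps εbar)) = {0})
    (ϑ : EuclideanSpace ℝ (Fin p) → ℝ)
    (hϑ : ∀ z, ϑ z = Metric.infDist (z - xk) (Eeps εbar)ᶜ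
                      - Metric.infDist (z - xk) (Eeps εbar)) :
    (∃ K : NNReal, LipschitzWith K ϑ) ∧
    Continuous ϑ ∧
    (∀ (a b : EuclideanSpace ℝ (Fin p)) (lam : ℝ), 0 ≤ lam → lam ≤ 1 →
      lam * ϑ a + (1 - lam) * ϑ b ≤ ϑ (lam • a + (1 - lam) • b)) ∧
    (∀ (a b : EuclideanSpace ℝ (Fin p)) (lam : ℝ), 0 ≤ lam → lam ≤ 1 →
      min (ϑ a) (ϑ b) ≤ ϑ (lam • a + (1 - lam) • b)) ∧
    (∀ a b : EuclideanSpace ℝ (Fin p), b - a ∈ Eeps εbar → ϑ a ≤ ϑ b) ∧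
    (∀ a b : EuclideanSpace ℝ (Fin p), (∀ i, a i ≤ b i) → ϑ a ≤ ϑ b) ∧
    ϑ xk = 0 ∧
    (∀ j : Fin t, ϑ xk < ϑ (x j)) := by
  set K := spanAddOrthant fun j => x j - εbar • e - xk
  have hK : Eeps εbar = K := by rw [hEeps]; rfl
  rw [hK] at hpointed hϑ ⊢
  obtain rfl : ϑ = fun z => signedInfDist K (z - xk) := funext hϑ
  have hball (j : Fin t) : closedBall (x j - xk) εbar ⊆ K := by
    convert closedBall_add_smul_subset_spanAddOrthant he j εbar using 2
    abel
  have : Nonempty (Fin p) := ⟨⟨0, hp⟩⟩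
  have hxk := zero_mem_closure_compl_spanAddOrthant he hpointed
  have hmono (a b : EuclideanSpace ℝ (Fin p)) (hab : b - a ∈ K) :
      signedInfDist K (a - xk) ≤ signedInfDist K (b - xk) := by
    simpa using signedInfDist_le_signedInfDist_add (fun z hz => K.add_mem hz hab) (a - xk)
  have hconc : ConcaveOn ℝ univ fun z => signedInfDist K (z - xk) := by
    simpa [Function.comp_def, neg_add_eq_sub] using
      (concaveOn_signedInfDist K.convex).translate_right (-xk)
  have hzero : signedInfDist K (xk - xk) = 0 := by
    rw [sub_self]; exact signedInfDist_eq_zero_of_mem_of_mem_closure K.zero_mem hxk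
  have hlip := (lipschitzWith_signedInfDist (K : Set (EuclideanSpace ℝ (Fin p)))).comp
    (IsometryEquiv.subRight xk).isometry.lipschitz
  refine ⟨⟨_, hlip⟩, hlip.continuous,
    fun a b lam h0 h1 => hconc.2 trivial trivial h0 (by linarith) (by ring),
    fun a b lam h0 h1 =>
      hconc.min_le_of_mem_segment trivial trivial ⟨lam, 1 - lam, h0, by linarith, by ring, rfl⟩,
    hmono, fun a b hab => hmono a b (mem_spanAddOrthant_of_nonneg fun i => by simpa using hab i),
    hzero, fun j => ?_⟩
  have hpos := sub_dist_le_signedInfDist (closure_nonempty_iff.1 ⟨_, hxk⟩) hεbar.le (hball j)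
    (x j - xk)
  rw [dist_self, sub_zero] at hpos
  exact hzero.trans_lt (hεbar.trans_le hpos)

/-- If E^{ε̄} is pointed for some ε̄ > 0, then ϑ defined by
ϑ(x) := dist(x − x_k, ℝ^p ∖ E^{ε̄}) − dist(x − x_k, E^{ε̄}) is Lipschitz (hence
continuous), concave (hence quasi-concave), increasing w.r.t. E^{ε̄}, increasing
w.r.t. the componentwise order, and satisfies ϑ(x_k) = 0 and ϑ(x_j) > ϑ(x_k). -/
theorem stmt_14 (p t : ℕ) (hp : 1 ≤ p) (ht : 1 ≤ t)
    (x : Fin t → EuclideanSpace ℝ (Fin p)) (xk : EuclideanSpace ℝ (Fin p))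
    (e : EuclideanSpace ℝ (Fin p)) (he : ∀ i, e i = 1)
    (Eeps : ℝ → Set (EuclideanSpace ℝ (Fin p)))
    (hEeps : ∀ ε : ℝ, Eeps ε = {z | ∃ (lam : Fin t → ℝ) (r : EuclideanSpace ℝ (Fin p)),
        (∀ j, 0 ≤ lam j) ∧ (∀ i, 0 ≤ r i) ∧
        z = (∑ j, lam j • (x j - ε • e - xk)) + r})
    (εbar : ℝ) (hεbar : 0 < εbar)
    (hpointed : Eeps εbar ∩ (-(Eeps εbar)) = {0})
    (ϑ : EuclideanSpace ℝ (Fin p) → ℝ)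
    (hϑ : ∀ z, ϑ z = Metric.infDist (z - xk) (Eeps εbar)ᶜ
                      - Metric.infDist (z - xk) (Eeps εbar)) :
    (∃ K : NNReal, LipschitzWith K ϑ) ∧
    Continuous ϑ ∧
    (∀ (a b : EuclideanSpace ℝ (Fin p)) (lam : ℝ), 0 ≤ lam → lam ≤ 1 →
      lam * ϑ a + (1 - lam) * ϑ b ≤ ϑ (lam • a + (1 - lam) • b)) ∧
    (∀ (a b : EuclideanSpace ℝ (Fin p)) (lam : ℝ), 0 ≤ lam → lam ≤ 1 →
      min (ϑ a) (ϑ b) ≤ ϑ (lam • a + (1 - lam) • b)) ∧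
    (∀ a b : EuclideanSpace ℝ (Fin p), b - a ∈ Eeps εbar → ϑ a ≤ ϑ b) ∧
    (∀ a b : EuclideanSpace ℝ (Fin p), (∀ i, a i ≤ b i) → ϑ a ≤ ϑ b) ∧
    ϑ xk = 0 ∧
    (∀ j : Fin t, ϑ xk < ϑ (x j)) :=
  stmt_14_general p t hp x xk e he Eeps hEeps εbar hεbar hpointed ϑ hϑ
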